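/- Let λ > 0, T > 0, and for (x,t) with |x| ≤ 1 let φ(x,t) = e^{λ(|x-ϑ|² - (1/4)(t - x·ω)²)} with |ϑ| = 2 and ω a unit vector. Define κ(σ) = sup_{|x| ≤ 1} ∫_{-T}^{T} e^{2σ(φ(x,t) - φ(x, x·ω))} dt. Then κ(σ) → 0 as σ → ∞. -/

import Mathlib

/-!
Write `a = x·ω` and `u = (λ/4)(t - a)²`. Then `φ(x, t) = A e^{-u}` with `A = φ(x, a) = e^{λ|x-ϑ|²} ≥ 1`,
so `φ(x, t) - φ(x, a) ≤ e^{-u} - 1 ≤ -min(1/2, u/2)`. Hence the integrand is at most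
`e^{-σ} + e^{-σu}`, and integrating over `[-T, T]` bounds `κ(σ)` by
`2T e^{-σ} + √(4π / (σλ))`, uniformly in `x`; this tends to `0`.
-/

open scoped RealInnerProductSpace
open MeasureTheory Filter

theorem Real.exp_neg_le_inv_one_add {u : ℝ} (hu : 0 ≤ u) : Real.exp (-u) ≤ (1 + u)⁻¹ := by
  rw [Real.exp_neg]
  exact inv_anti₀ (by positivity) (by linarith [Real.add_one_le_exp u])

theorem Real.min_le_one_sub_exp_neg {u : ℝ} (hu : 0 ≤ u) :
    min (1 / 2) (u / 2) ≤ 1 - Real.exp (-u) := by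
  have hinv : 1 - (1 + u)⁻¹ = u / (1 + u) := by field_simp; ring
  have hmin : min (1 / 2) (u / 2) ≤ u / (1 + u) := by
    rw [le_div_iff₀ (by positivity)]
    rcases le_total u 1 with h | h <;>
      nlinarith [min_le_right (1 / 2 : ℝ) (u / 2), min_le_left (1 / 2 : ℝ) (u / 2)]
  linarith [Real.exp_neg_le_inv_one_add hu]

theorem Real.exp_neg_mul_min_le_add (σ a b : ℝ) :
    Real.exp (-(σ * min a b)) ≤ Real.exp (-(σ * a)) + Real.exp (-(σ * b)) := by
  rcases min_choice a b with h | h <;> rw [h]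
  · exact le_add_of_nonneg_right (Real.exp_pos _).le
  · exact le_add_of_nonneg_left (Real.exp_pos _).le

theorem Real.exp_two_mul_mul_exp_neg_sub_le {A u σ : ℝ} (hA : 1 ≤ A) (hu : 0 ≤ u) (hσ : 0 ≤ σ) :
    Real.exp (2 * σ * (A * Real.exp (-u) - A)) ≤ Real.exp (-σ) + Real.exp (-(σ * u)) := by
  have hexp : Real.exp (-u) ≤ 1 := Real.exp_le_one_iff.mpr (neg_nonpos.mpr hu)
  have hdiff : A * Real.exp (-u) - A ≤ -min (1 / 2) (u / 2) := by
    nlinarith [Real.min_le_one_sub_exp_neg hu, mul_nonneg (sub_nonneg.mpr hA) (sub_nonneg.mpr hexp)]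
  have hmin : 2 * min (1 / 2) (u / 2) = min 1 u := by
    rw [mul_min_of_nonneg _ _ zero_le_two]; congr 1 <;> ring
  calc Real.exp (2 * σ * (A * Real.exp (-u) - A))
      ≤ Real.exp (-(σ * min 1 u)) := by
        gcongr
        nlinarith [mul_le_mul_of_nonneg_left hdiff (by positivity : (0 : ℝ) ≤ 2 * σ)]
    _ ≤ Real.exp (-(σ * 1)) + Real.exp (-(σ * u)) := Real.exp_neg_mul_min_le_add σ 1 u
    _ = Real.exp (-σ) + Real.exp (-(σ * u)) := by rw [mul_one]

theorem intervalIntegral.integral_exp_neg_mul_sub_sq_le {c : ℝ} (hc : 0 < c) {a b : ℝ} (hab : a ≤ b)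
    (s : ℝ) : ∫ t in a..b, Real.exp (-c * (t - s) ^ 2) ≤ Real.sqrt (Real.pi / c) := by
  have hint : Integrable (fun t : ℝ => Real.exp (-c * (t - s) ^ 2)) :=
    (integrable_exp_neg_mul_sq hc).comp_sub_right s
  calc ∫ t in a..b, Real.exp (-c * (t - s) ^ 2)
      ≤ ∫ t, Real.exp (-c * (t - s) ^ 2) := by
        rw [intervalIntegral.integral_of_le hab]
        exact setIntegral_le_integral hint (Eventually.of_forall fun t => (Real.exp_pos _).le)
    _ = ∫ t, Real.exp (-c * t ^ 2) := integral_sub_right_eq_self (fun t => Real.exp (-c * t ^ 2)) s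
    _ = Real.sqrt (Real.pi / c) := integral_gaussian c

theorem intervalIntegral.integral_le_of_le_add_exp_neg_mul_sub_sq {f : ℝ → ℝ} {a b c ε s : ℝ}
    (hab : a ≤ b) (hc : 0 < c) (hf : IntervalIntegrable f volume a b)
    (hle : ∀ t, f t ≤ ε + Real.exp (-c * (t - s) ^ 2)) :
    ∫ t in a..b, f t ≤ (b - a) * ε + Real.sqrt (Real.pi / c) := by
  have hgauss : IntervalIntegrable (fun t => Real.exp (-c * (t - s) ^ 2)) volume a b :=
    (by fun_prop : Continuous fun t : ℝ => Real.exp (-c * (t - s) ^ 2)).intervalIntegrable a b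
  calc ∫ t in a..b, f t
      ≤ ∫ t in a..b, (ε + Real.exp (-c * (t - s) ^ 2)) :=
        intervalIntegral.integral_mono_on hab hf (intervalIntegrable_const.add hgauss)
          fun t _ => hle t
    _ = (b - a) * ε + ∫ t in a..b, Real.exp (-c * (t - s) ^ 2) := by
        rw [intervalIntegral.integral_add intervalIntegrable_const hgauss,
          intervalIntegral.integral_const, smul_eq_mul]
    _ ≤ (b - a) * ε + Real.sqrt (Real.pi / c) := by
        gcongr; exact intervalIntegral.integral_exp_neg_mul_sub_sq_le hc hab s

theorem tendsto_mul_exp_neg_add_sqrt_pi_div_atTop (K : ℝ) {c : ℝ} (hc : 0 < c) :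
    Tendsto (fun σ => K * Real.exp (-σ) + Real.sqrt (Real.pi / (σ * c))) atTop (nhds 0) := by
  have hexp : Tendsto (fun σ => K * Real.exp (-σ)) atTop (nhds 0) := by
    simpa using Real.tendsto_exp_neg_atTop_nhds_zero.const_mul K
  have hdiv : Tendsto (fun σ => Real.pi / (σ * c)) atTop (nhds 0) :=
    tendsto_const_nhds.div_atTop (tendsto_id.atTop_mul_const hc)
  simpa using hexp.add ((Real.continuous_sqrt.tendsto 0).comp hdiv)

theorem stmt_4_general {n : ℕ} (lam T : ℝ) (hlam : 0 < lam) (hT : 0 < T)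
    (ϑ ω : EuclideanSpace ℝ (Fin n))
    (φ : EuclideanSpace ℝ (Fin n) → ℝ → ℝ)
    (hφ : ∀ x t, φ x t = Real.exp (lam * (‖x - ϑ‖ ^ 2 - (1 / 4) * (t - ⟪x, ω⟫) ^ 2))) :
    Tendsto
      (fun σ : ℝ => ⨆ x : Metric.closedBall (0 : EuclideanSpace ℝ (Fin n)) 1,
        ∫ t in (-T)..T, Real.exp (2 * σ * (φ x t - φ x ⟪(x : EuclideanSpace ℝ (Fin n)), ω⟫)))
      atTop (nhds 0) := by
  have hTle : -T ≤ T := by linarith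
  have : Nonempty (Metric.closedBall (0 : EuclideanSpace ℝ (Fin n)) 1) :=
    ⟨⟨0, Metric.mem_closedBall_self zero_le_one⟩⟩
  refine tendsto_of_tendsto_of_tendsto_of_le_of_le' tendsto_const_nhds
    (tendsto_mul_exp_neg_add_sqrt_pi_div_atTop (T - -T) (by positivity : 0 < lam / 4)) ?_ ?_
  · exact Eventually.of_forall fun σ => Real.iSup_nonneg fun x =>
      intervalIntegral.integral_nonneg hTle fun t _ => (Real.exp_pos _).le
  filter_upwards [eventually_gt_atTop 0] with σ hσ
  refine ciSup_le fun x => ?_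
  obtain ⟨x, -⟩ := x
  set a := ⟪x, ω⟫
  have hφx : ∀ t, φ x t = Real.exp (lam * ‖x - ϑ‖ ^ 2) * Real.exp (-(lam / 4 * (t - a) ^ 2)) := by
    intro t; rw [hφ, ← Real.exp_add]; congr 1; ring
  have hφa : φ x a = Real.exp (lam * ‖x - ϑ‖ ^ 2) := by rw [hφ, sub_self]; norm_num
  refine intervalIntegral.integral_le_of_le_add_exp_neg_mul_sub_sq (c := σ * (lam / 4)) (s := a) hTle
    (by positivity) ?_ ?_
  · refine Continuous.intervalIntegrable ?_ _ _
    simp only [hφx]; fun_prop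
  · intro t
    have hA : 1 ≤ Real.exp (lam * ‖x - ϑ‖ ^ 2) := Real.one_le_exp (by positivity)
    have hbound := Real.exp_two_mul_mul_exp_neg_sub_le hA
      (by positivity : 0 ≤ lam / 4 * (t - a) ^ 2) hσ.le
    rw [hφx, hφa]
    convert hbound using 3; ring

theorem stmt_4 {n : ℕ} (lam T : ℝ) (hlam : 0 < lam) (hT : 0 < T)
    (ϑ ω : EuclideanSpace ℝ (Fin n)) (hϑ : ‖ϑ‖ = 2) (hω : ‖ω‖ = 1)
    (φ : EuclideanSpace ℝ (Fin n) → ℝ → ℝ)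
    (hφ : ∀ x t, φ x t = Real.exp (lam * (‖x - ϑ‖ ^ 2 - (1 / 4) * (t - ⟪x, ω⟫) ^ 2))) :
    Tendsto
      (fun σ : ℝ => ⨆ x : Metric.closedBall (0 : EuclideanSpace ℝ (Fin n)) 1,
        ∫ t in (-T)..T, Real.exp (2 * σ * (φ x t - φ x ⟪(x : EuclideanSpace ℝ (Fin n)), ω⟫)))
      atTop (nhds 0) :=
  stmt_4_general lam T hlam hT ϑ ω φ hφ
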